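/- Let M be a Garside monoid, let N and K be parabolic submonoids of M, and let g1, g2 ∈ G(M) with g2 ∈ G(K). If g1 ≤_N g2, then g1 ∈ G(K). In particular, the ≤_N-minimal representative m_N(g2) of the coset g2 G(N) lies in G(K). -/

import Mathlib

namespace PG

variable {M : Type*} [Monoid M]

/-- `LDvd a b` : `a` left-divides `b`. -/
def LDvd (a b : M) : Prop := ∃ c, b = a * c

/-- `RDvd a b` : `a` right-divides `b`. -/
def RDvd (a b : M) : Prop := ∃ c, b = c * a

/-- A monoid is cancellative if `c * a * d = c * b * d` implies `a = b`. -/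
def IsCancellative (M : Type*) [Monoid M] : Prop :=
  ∀ a b c d : M, c * a * d = c * b * d → a = b

/-- A monoid is atomic if it admits a norm `ν : M → ℕ` with `ν a > 0` for `a ≠ 1`
and `ν (a * b) ≥ ν a + ν b`. -/
def IsAtomicMon (M : Type*) [Monoid M] : Prop :=
  ∃ ν : M → ℕ, (∀ a : M, a ≠ 1 → 0 < ν a) ∧ ∀ a b : M, ν a + ν b ≤ ν (a * b)

/-- `m` is the least common multiple of `a` and `b` for left-divisibility. -/
def IsLcmL (a b m : M) : Prop :=
  LDvd a m ∧ LDvd b m ∧ ∀ c : M, LDvd a c → LDvd b c → LDvd m c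

/-- `m` is the least common multiple of `a` and `b` for right-divisibility. -/
def IsLcmR (a b m : M) : Prop :=
  RDvd a m ∧ RDvd b m ∧ ∀ c : M, RDvd a c → RDvd b c → RDvd m c

/-- `d` is the greatest common left-divisor of `a` and `b`. -/
def IsGcdL (a b d : M) : Prop :=
  LDvd d a ∧ LDvd d b ∧ ∀ c : M, LDvd c a → LDvd c b → LDvd c d

/-- `d` is the greatest common right-divisor of `a` and `b`. -/
def IsGcdR (a b d : M) : Prop :=
  RDvd d a ∧ RDvd d b ∧ ∀ c : M, RDvd c a → RDvd c b → RDvd c d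

/-- A preGarside monoid: cancellative, atomic, and any two elements admitting a
common multiple (on the appropriate side) admit a least one. -/
def IsPreGarside (M : Type*) [Monoid M] : Prop :=
  IsCancellative M ∧ IsAtomicMon M ∧
    (∀ a b : M, (∃ c, LDvd a c ∧ LDvd b c) → ∃ m, IsLcmL a b m) ∧
    (∀ a b : M, (∃ c, RDvd a c ∧ RDvd b c) → ∃ m, IsLcmR a b m)

/-- A submonoid is special if it is closed under factors. -/
def IsSpecial (N : Submonoid M) : Prop := ∀ a b : M, a * b ∈ N → a ∈ N ∧ b ∈ N

/-- A (standard) parabolic submonoid: special and closed under all existing lcms. -/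
def IsParabolic (N : Submonoid M) : Prop :=
  IsSpecial N ∧ (∀ a b m : M, a ∈ N → b ∈ N → IsLcmL a b m → m ∈ N) ∧
    ∀ a b m : M, a ∈ N → b ∈ N → IsLcmR a b m → m ∈ N

/-- `b` is a factor of `a`. -/
def Factor (b a : M) : Prop := ∃ c d : M, a = c * b * d

/-- The set of factors of `a`. -/
def Factors (a : M) : Set M := {b | Factor b a}

/-- An element is balanced when its left-divisors and right-divisors coincide. -/
def IsBalanced (a : M) : Prop := {b : M | LDvd b a} = {b : M | RDvd b a}

/-- A Garside element: balanced, and its factors generate the monoid. -/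
def IsGarsideElt (Δ : M) : Prop := IsBalanced Δ ∧ Submonoid.closure (Factors Δ) = ⊤

/-- A Garside monoid: a preGarside monoid possessing a Garside element. -/
def IsGarside (M : Type*) [Monoid M] : Prop := IsPreGarside M ∧ ∃ Δ : M, IsGarsideElt Δ

/-- The factors of `a` computed inside the submonoid `N`. -/
def FactorsIn (N : Submonoid M) (a : M) : Set M :=
  {b | b ∈ N ∧ ∃ c ∈ N, ∃ d ∈ N, a = c * b * d}

/-- `Δ` is a Garside element of the submonoid `N`: it is balanced in `N` and its
factors in `N` generate `N`. -/
def IsGarsideEltIn (N : Submonoid M) (Δ : M) : Prop :=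
  Δ ∈ N ∧ ({b : M | b ∈ N ∧ ∃ c ∈ N, Δ = b * c} = {b : M | b ∈ N ∧ ∃ c ∈ N, Δ = c * b}) ∧
    Submonoid.closure (FactorsIn N Δ) = N

/-- The right coset `g * N` (an `R_N`-class). -/
def RCoset (N : Submonoid M) (g : M) : Set M := {x | ∃ h ∈ N, x = g * h}

/-- The left coset `N * g` (an `L_N`-class). -/
def LCoset (N : Submonoid M) (g : M) : Set M := {x | ∃ h ∈ N, x = h * g}

/-- `RReduces N B A` : the `R_N`-class `B` reduces in one step to the `R_N`-class `A`,
i.e. `A = g₁ N`, `B = g₂ N` with `g₂ ∈ g₁ N` and `g₁ ∉ g₂ N`. -/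
def RReduces (N : Submonoid M) (B A : Set M) : Prop :=
  ∃ g₁ g₂ : M, A = RCoset N g₁ ∧ B = RCoset N g₂ ∧ g₂ ∈ RCoset N g₁ ∧ g₁ ∉ RCoset N g₂

/-- `LReduces N B A` : the `L_N`-class `B` reduces in one step to the `L_N`-class `A`. -/
def LReduces (N : Submonoid M) (B A : Set M) : Prop :=
  ∃ g₁ g₂ : M, A = LCoset N g₁ ∧ B = LCoset N g₂ ∧ g₂ ∈ LCoset N g₁ ∧ g₁ ∉ LCoset N g₂

/-- `N` has the `R` confluence property: the reduction rule on `R_N`-classes is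
Noetherian and locally confluent. -/
def RConfluence (N : Submonoid M) : Prop :=
  (¬ ∃ f : ℕ → Set M, ∀ n : ℕ, RReduces N (f n) (f (n + 1))) ∧
    ∀ C A B : Set M, RReduces N C A → RReduces N C B →
      ∃ D : Set M, Relation.ReflTransGen (RReduces N) A D ∧
        Relation.ReflTransGen (RReduces N) B D

/-- `N` has the `L` confluence property. -/
def LConfluence (N : Submonoid M) : Prop :=
  (¬ ∃ f : ℕ → Set M, ∀ n : ℕ, LReduces N (f n) (f (n + 1))) ∧
    ∀ C A B : Set M, LReduces N C A → LReduces N C B →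
      ∃ D : Set M, Relation.ReflTransGen (LReduces N) A D ∧
        Relation.ReflTransGen (LReduces N) B D

/-- `N` has the confluence property. -/
def Confluence (N : Submonoid M) : Prop := RConfluence N ∧ LConfluence N

/-- The `R_N`-class `C` is minimal: whenever `g` represents `C` and `g = g' * h` with
`h ∈ N`, one has `g' N = C`. -/
def IsMinimalRCoset (N : Submonoid M) (C : Set M) : Prop :=
  (∃ g : M, C = RCoset N g) ∧
    ∀ g g' h : M, h ∈ N → C = RCoset N g → g = g' * h → RCoset N g' = C

/-- The `L_N`-class `C` is minimal. -/
def IsMinimalLCoset (N : Submonoid M) (C : Set M) : Prop :=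
  (∃ g : M, C = LCoset N g) ∧
    ∀ g g' h : M, h ∈ N → C = LCoset N g → g = h * g' → LCoset N g' = C

/-- The set of atoms of `M`. -/
def AtomSet (M : Type*) [Monoid M] : Set M :=
  {a | a ≠ 1 ∧ ∀ b c : M, a = b * c → b = 1 ∨ c = 1}

/-- `|x|` : the least number of factors of `Δ` needed to write `x` as a product. -/
noncomputable def lenFactors (Δ x : M) : ℕ :=
  sInf {k | ∃ l : List M, l.length = k ∧ (∀ y ∈ l, y ∈ Factors Δ) ∧ l.prod = x}

section Amalgam

variable {M₁ M₂ N : Type*} [Monoid M₁] [Monoid M₂] [Monoid N]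

/-- The congruence on the free product `M₁ ∗ M₂` identifying `ι₁ h` with `ι₂ h`
for every `h ∈ N`. -/
def amalgamCon (ι₁ : N →* M₁) (ι₂ : N →* M₂) : Con (Monoid.Coprod M₁ M₂) :=
  conGen fun a b => ∃ h : N, a = Monoid.Coprod.inl (ι₁ h) ∧ b = Monoid.Coprod.inr (ι₂ h)

/-- The amalgamated product `M₁ *_N M₂` : the pushout of `ι₁ : N →* M₁` and
`ι₂ : N →* M₂` in the category of monoids. -/
def Amalgam (ι₁ : N →* M₁) (ι₂ : N →* M₂) : Type _ := (amalgamCon ι₁ ι₂).Quotient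

instance (ι₁ : N →* M₁) (ι₂ : N →* M₂) : Monoid (Amalgam ι₁ ι₂) :=
  inferInstanceAs (Monoid (amalgamCon ι₁ ι₂).Quotient)

/-- The canonical morphism `M₁ →* M₁ *_N M₂`. -/
def amalgamInl (ι₁ : N →* M₁) (ι₂ : N →* M₂) : M₁ →* Amalgam ι₁ ι₂ :=
  (amalgamCon ι₁ ι₂).mk'.comp Monoid.Coprod.inl

/-- The canonical morphism `M₂ →* M₁ *_N M₂`. -/
def amalgamInr (ι₁ : N →* M₁) (ι₂ : N →* M₂) : M₂ →* Amalgam ι₁ ι₂ :=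
  (amalgamCon ι₁ ι₂).mk'.comp Monoid.Coprod.inr

end Amalgam

section Groups

/-- `G`, together with `κ : M →* G`, is the enveloping group `G(M)` of the monoid `M`:
every monoid morphism from `M` to a group factors uniquely through `κ`. -/
def IsEnvelopingGroup (M : Type) [Monoid M] (G : Type) [Group G] (κ : M →* G) : Prop :=
  ∀ (H : Type) [Group H], ∀ f : M →* H, ∃! φ : G →* H, φ.comp κ = f

variable {G : Type*} [Group G]

/-- `(a, b)` is the (right) normal form of `g ∈ G(M)` : `g = a b⁻¹` with `a ∧_R b = 1`. -/
def NormalForm (κ : M →* G) (g : G) (a b : M) : Prop :=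
  g = κ a * (κ b)⁻¹ ∧ ∀ c : M, RDvd c a → RDvd c b → c = 1

/-- The relation `≤_N` on `G(M)` : for `g₁ = a₁ b₁⁻¹` and `g₂ = a₂ b₂⁻¹` in normal form,
`g₁ ≤_N g₂` iff there are `h₁, h₂ ∈ N` and `a ∈ M` with `a₂ = a₁ a`,
`h₂ b₂ = h₁ b₁ a` and `h₂ ∧_L h₁ = h₂ ∧_L (h₁ b₁)`. -/
def leN (κ : M →* G) (N : Submonoid M) (g₁ g₂ : G) : Prop :=
  ∃ a₁ b₁ a₂ b₂ : M, NormalForm κ g₁ a₁ b₁ ∧ NormalForm κ g₂ a₂ b₂ ∧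
    ∃ h₁ ∈ N, ∃ h₂ ∈ N, ∃ a : M, a₂ = a₁ * a ∧ h₂ * b₂ = h₁ * b₁ * a ∧
      ∃ d : M, IsGcdL h₂ h₁ d ∧ IsGcdL h₂ (h₁ * b₁) d

/-- `|g|` for `g ∈ G(M)` : the least number of factors of `Δ` and inverses of such
needed to write `g` as a product. -/
noncomputable def lenSimple (κ : M →* G) (Δ : M) (g : G) : ℕ :=
  sInf {k | ∃ l : List G, l.length = k ∧
    (∀ x ∈ l, ∃ d ∈ Factors Δ, x = κ d ∨ x = (κ d)⁻¹) ∧ l.prod = g}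

/-- `PhiSpec κ Δ ΔN g h m` : `m = φ_g(h)`, where, for `g` with normal form `a b⁻¹`,
`φ_g(h) = a (a ∧_R (h b))⁻¹ (M_N(h b (a ∧_R (h b))⁻¹))⁻¹` and
`M_N(x) = (x ∧_L Δ_N^{|x|})⁻¹ x`. -/
def PhiSpec (κ : M →* G) (Δ ΔN : M) (g : G) (h : M) (m : G) : Prop :=
  ∃ a b c y d z : M,
    NormalForm κ g a b ∧ IsGcdR a (h * b) c ∧ h * b = y * c ∧
    IsGcdL y (ΔN ^ lenFactors Δ y) d ∧ y = d * z ∧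
    m = κ a * (κ c)⁻¹ * (κ z)⁻¹

/-- The restriction of `κ : M →* G` to a submonoid `N`, seen as a morphism onto the
subgroup of `G` generated by the image of `N`. -/
def restrictHom (κ : M →* G) (N : Submonoid M) :
    ↥N →* ↥(Subgroup.closure (κ '' (N : Set M))) :=
  MonoidHom.codRestrict (κ.comp N.subtype) (Subgroup.closure (κ '' (N : Set M)))
    fun x => Subgroup.subset_closure ⟨(x : M), x.2, rfl⟩

end Groups

/-- The family of preGarside monoids of FC type: the smallest family of monoids
containing the Garside monoids and closed under amalgamated products over a common
parabolic submonoid (and under isomorphism). -/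
inductive IsFCType : (M : Type) → [_inst : Monoid M] → Prop where
  | garside : ∀ (M : Type) [Monoid M], IsGarside M → IsFCType M
  | amalgam : ∀ (M₁ M₂ N : Type) [Monoid M₁] [Monoid M₂] [Monoid N]
      (ι₁ : N →* M₁) (ι₂ : N →* M₂),
      Function.Injective ι₁ → Function.Injective ι₂ →
      IsParabolic (MonoidHom.mrange ι₁) → IsParabolic (MonoidHom.mrange ι₂) →
      IsFCType M₁ → IsFCType M₂ → IsFCType (Amalgam ι₁ ι₂)
  | congr : ∀ (M : Type) [Monoid M] (M' : Type) [Monoid M'],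
      (M ≃* M') → IsFCType M → IsFCType M'

/-! In a Garside monoid any two elements have common multiples on both sides, so `G(M)` is the
group of right fractions `a b⁻¹` and normal forms are unique; in particular the normal form of an
element of `G(K)` has both entries in `K`.

(a) If `g₁ = a₁ b₁⁻¹ ≤_N g₂ = a₂ b₂⁻¹`, then `a₁` left-divides `a₂ ∈ K`. Cancelling
`h₂ ∧_L h₁ = h₂ ∧_L h₁ b₁` from `h₂ b₂ = h₁ b₁ a` leaves `e₂ b₂ = (e₁ b₁) a` with `e₂` and
`e₁ b₁` left-coprime. Their left lcm `L` then equals `q ∨_R p`, where `q` and `p` are the left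
divisors of `a, b₂ ∈ K` with `e₁ b₁ q = L = e₂ p`; hence `L ∈ K`, and so `b₁ ∈ K`.

(b) Write `g₂ = p q⁻¹` over `K`, `g₂⁻¹ m = c d⁻¹ = h₁⁻¹ h₂` over `N`, and `m = α β⁻¹` in normal
form. Then `α (h₂ β)⁻¹ = p (h₁ q)⁻¹`, so `α u = p v` and `h₂ β u = h₁ q v`. Cancelling `u`
through the right lcm of `u` and `v` keeps the shape "`K` on the left, `N * K` on the right",
and dividing by the relevant gcds produces `x ∈ G(K)` with `x ≤_N m`, which lies in `m G(N)`;
minimality of `m` forces `x = m`. -/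

open scoped Pointwise

section Divisibility

theorem IsCancellative.left_cancel (hc : IsCancellative M) {a b c : M} (h : c * a = c * b) :
    a = b :=
  hc a b c 1 (by simp [h])

theorem IsCancellative.right_cancel (hc : IsCancellative M) {a b d : M} (h : a * d = b * d) :
    a = b :=
  hc a b 1 d (by simp [h])

theorem IsAtomicMon.eq_one_of_mul_eq_one (hA : IsAtomicMon M) {a b : M} (h : a * b = 1) :
    a = 1 ∧ b = 1 := by
  obtain ⟨ν, hpos, hsub⟩ := hA
  have hν1 : ν 1 = 0 := by have := hsub 1 1; simp only [mul_one] at this; omega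
  have hab := hsub a b
  rw [h, hν1] at hab
  exact ⟨not_imp_comm.mp (hpos a) (by omega), not_imp_comm.mp (hpos b) (by omega)⟩

theorem one_ldvd (a : M) : LDvd 1 a := ⟨a, (one_mul a).symm⟩

theorem one_rdvd (a : M) : RDvd 1 a := ⟨a, (mul_one a).symm⟩

theorem ldvd_mul_right (a b : M) : LDvd a (a * b) := ⟨b, rfl⟩

theorem rdvd_mul_left (a b : M) : RDvd b (a * b) := ⟨a, rfl⟩

theorem LDvd.trans {a b c : M} (h₁ : LDvd a b) (h₂ : LDvd b c) : LDvd a c := by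
  obtain ⟨u, rfl⟩ := h₁; obtain ⟨v, rfl⟩ := h₂; exact ⟨u * v, mul_assoc _ _ _⟩

theorem RDvd.trans {a b c : M} (h₁ : RDvd a b) (h₂ : RDvd b c) : RDvd a c := by
  obtain ⟨u, rfl⟩ := h₁; obtain ⟨v, rfl⟩ := h₂; exact ⟨v * u, (mul_assoc _ _ _).symm⟩

def LCoprime (a b : M) : Prop := ∀ c, LDvd c a → LDvd c b → c = 1

def RCoprime (a b : M) : Prop := ∀ c, RDvd c a → RDvd c b → c = 1

theorem LCoprime.isGcdL_one {a b c : M} (h : LCoprime a b) (hc : LDvd c b) : IsGcdL a c 1 :=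
  ⟨one_ldvd a, one_ldvd c, fun e hea hec => by
    obtain rfl := h e hea (hec.trans hc); exact one_ldvd 1⟩

theorem IsGcdL.lcoprime_of_eq (hc : IsCancellative M) (hA : IsAtomicMon M) {a b d a' b' : M}
    (hd : IsGcdL a b d) (ha : a = d * a') (hb : b = d * b') : LCoprime a' b' := by
  rintro e ⟨s, rfl⟩ ⟨t, rfl⟩
  obtain ⟨w, hw⟩ := hd.2.2 (d * e) ⟨s, by rw [ha, mul_assoc]⟩ ⟨t, by rw [hb, mul_assoc]⟩
  exact (hA.eq_one_of_mul_eq_one (hc.left_cancel (b := 1) (by rw [← mul_assoc, ← hw, mul_one]))).1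

theorem IsGcdR.rcoprime_of_eq (hc : IsCancellative M) (hA : IsAtomicMon M) {a b d a' b' : M}
    (hd : IsGcdR a b d) (ha : a = a' * d) (hb : b = b' * d) : RCoprime a' b' := by
  rintro e ⟨s, rfl⟩ ⟨t, rfl⟩
  obtain ⟨w, hw⟩ := hd.2.2 (e * d) ⟨s, by rw [ha, mul_assoc]⟩ ⟨t, by rw [hb, mul_assoc]⟩
  exact (hA.eq_one_of_mul_eq_one (hc.right_cancel (b := 1) (by rw [mul_assoc, ← hw, one_mul]))).2

end Divisibility

section PreGarside

theorem IsPreGarside.cancellative (hM : IsPreGarside M) : IsCancellative M := hM.1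

theorem IsPreGarside.atomic (hM : IsPreGarside M) : IsAtomicMon M := hM.2.1

theorem IsPreGarside.exists_isLcmL (hM : IsPreGarside M) {a b c : M} (ha : LDvd a c)
    (hb : LDvd b c) : ∃ m, IsLcmL a b m :=
  hM.2.2.1 a b ⟨c, ha, hb⟩

theorem IsPreGarside.exists_isLcmR (hM : IsPreGarside M) {a b c : M} (ha : RDvd a c)
    (hb : RDvd b c) : ∃ m, IsLcmR a b m :=
  hM.2.2.2 a b ⟨c, ha, hb⟩

/-- A common divisor of maximal norm is the greatest one, as soon as lcms of divisors exist. -/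
theorem exists_greatest_common_divisor {α : Type*} (D : α → α → Prop) (ν : α → ℕ)
    {a b e : α} (hea : D e a) (heb : D e b) (hν : ∀ {x y}, D x y → ν x ≤ ν y)
    (heq : ∀ {x y}, D x y → ν y ≤ ν x → x = y)
    (hlcm : ∀ x y, D x a → D y a → ∃ m, D x m ∧ D y m ∧ ∀ z, D x z → D y z → D m z) :
    ∃ d, D d a ∧ D d b ∧ ∀ c, D c a → D c b → D c d := by
  classical
  let P : ℕ → Prop := fun n => ∃ c, D c a ∧ D c b ∧ ν c = n
  obtain ⟨d, hda, hdb, hdν⟩ : P (Nat.findGreatest P (ν a)) :=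
    Nat.findGreatest_spec (hν hea) ⟨e, hea, heb, rfl⟩
  refine ⟨d, hda, hdb, fun c hca hcb => ?_⟩
  obtain ⟨m, hdm, hcm, hmin⟩ := hlcm d c hda hca
  have hma := hmin a hda hca
  have hmd : ν m ≤ ν d := hdν ▸ Nat.le_findGreatest (hν hma) ⟨m, hma, hmin b hdb hcb, rfl⟩
  exact heq hdm hmd ▸ hcm

theorem IsPreGarside.exists_isGcdL (hM : IsPreGarside M) (a b : M) : ∃ d, IsGcdL a b d := by
  obtain ⟨ν, hpos, hsub⟩ := hM.atomic
  refine exists_greatest_common_divisor LDvd ν (one_ldvd a) (one_ldvd b) ?_ ?_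
    fun x y hx hy => hM.exists_isLcmL hx hy
  · rintro x _ ⟨u, rfl⟩; exact (Nat.le_add_right _ _).trans (hsub x u)
  · rintro x _ ⟨u, rfl⟩ hle
    obtain rfl : u = 1 := not_imp_comm.mp (hpos u) (by have := hsub x u; omega)
    exact (mul_one x).symm

theorem IsPreGarside.exists_isGcdR (hM : IsPreGarside M) (a b : M) : ∃ d, IsGcdR a b d := by
  obtain ⟨ν, hpos, hsub⟩ := hM.atomic
  refine exists_greatest_common_divisor RDvd ν (one_rdvd a) (one_rdvd b) ?_ ?_
    fun x y hx hy => hM.exists_isLcmR hx hy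
  · rintro x _ ⟨u, rfl⟩; exact (Nat.le_add_left _ _).trans (hsub u x)
  · rintro x _ ⟨u, rfl⟩ hle
    obtain rfl : u = 1 := not_imp_comm.mp (hpos u) (by have := hsub u x; omega)
    exact (one_mul x).symm

end PreGarside

section Garside

theorem IsBalanced.ldvd_iff_rdvd {Δ : M} (hΔ : IsBalanced Δ) (x : M) : LDvd x Δ ↔ RDvd x Δ :=
  Set.ext_iff.mp hΔ x

theorem IsBalanced.ldvd_of_mem_factors {Δ s : M} (hΔ : IsBalanced Δ) (hs : s ∈ Factors Δ) :
    LDvd s Δ := by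
  obtain ⟨c, d, rfl⟩ := hs
  exact (ldvd_mul_right s d).trans ((hΔ.ldvd_iff_rdvd _).mpr ⟨c, by rw [mul_assoc]⟩)

theorem IsBalanced.rdvd_of_mem_factors {Δ s : M} (hΔ : IsBalanced Δ) (hs : s ∈ Factors Δ) :
    RDvd s Δ := by
  obtain ⟨c, d, rfl⟩ := hs
  exact (rdvd_mul_left c s).trans ((hΔ.ldvd_iff_rdvd _).mp (ldvd_mul_right _ d))

theorem IsGarsideElt.exists_mul_eq_mul_left {Δ : M} (hΔ : IsGarsideElt Δ) (x : M) :
    ∃ z, Δ * x = z * Δ := by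
  have hx : x ∈ Submonoid.closure (Factors Δ) := hΔ.2 ▸ Submonoid.mem_top x
  induction hx using Submonoid.closure_induction with
  | mem s hs =>
    obtain ⟨t, ht⟩ := hΔ.1.rdvd_of_mem_factors hs
    obtain ⟨t', ht'⟩ := (hΔ.1.ldvd_iff_rdvd t).mp ⟨s, ht⟩
    refine ⟨t', ?_⟩
    calc Δ * s = t' * t * s := by rw [← ht']
      _ = t' * Δ := by rw [mul_assoc, ← ht]
  | one => exact ⟨1, by rw [mul_one, one_mul]⟩
  | mul x y _ _ ihx ihy =>
    obtain ⟨zx, hzx⟩ := ihx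
    obtain ⟨zy, hzy⟩ := ihy
    exact ⟨zx * zy, by rw [← mul_assoc, hzx, mul_assoc, hzy, ← mul_assoc]⟩

theorem IsGarsideElt.exists_mul_eq_mul_right {Δ : M} (hΔ : IsGarsideElt Δ) (x : M) :
    ∃ z, x * Δ = Δ * z := by
  have hx : x ∈ Submonoid.closure (Factors Δ) := hΔ.2 ▸ Submonoid.mem_top x
  induction hx using Submonoid.closure_induction with
  | mem s hs =>
    obtain ⟨u, hu⟩ := hΔ.1.ldvd_of_mem_factors hs
    obtain ⟨u', hu'⟩ := (hΔ.1.ldvd_iff_rdvd u).mpr ⟨s, hu⟩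
    refine ⟨u', ?_⟩
    calc s * Δ = s * (u * u') := by rw [← hu']
      _ = Δ * u' := by rw [← mul_assoc, ← hu]
  | one => exact ⟨1, by rw [mul_one, one_mul]⟩
  | mul x y _ _ ihx ihy =>
    obtain ⟨zx, hzx⟩ := ihx
    obtain ⟨zy, hzy⟩ := ihy
    exact ⟨zx * zy, by rw [mul_assoc, hzy, ← mul_assoc, hzx, mul_assoc]⟩

theorem IsGarsideElt.exists_pow_mul_eq_mul_pow {Δ : M} (hΔ : IsGarsideElt Δ) (x : M) (k : ℕ) :
    ∃ z, Δ ^ k * x = z * Δ ^ k := by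
  induction k generalizing x with
  | zero => exact ⟨x, by simp⟩
  | succ k ih =>
    obtain ⟨y, hy⟩ := hΔ.exists_mul_eq_mul_left x
    obtain ⟨z, hz⟩ := ih y
    exact ⟨z, by rw [pow_succ, mul_assoc, hy, ← mul_assoc, hz, mul_assoc]⟩

theorem IsGarsideElt.exists_mul_pow_eq_pow_mul {Δ : M} (hΔ : IsGarsideElt Δ) (x : M) (k : ℕ) :
    ∃ z, x * Δ ^ k = Δ ^ k * z := by
  induction k generalizing x with
  | zero => exact ⟨x, by simp⟩
  | succ k ih =>
    obtain ⟨y, hy⟩ := ih x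
    obtain ⟨z, hz⟩ := hΔ.exists_mul_eq_mul_right y
    exact ⟨z, by rw [pow_succ, ← mul_assoc, hy, mul_assoc, hz, mul_assoc]⟩

theorem IsGarsideElt.exists_ldvd_pow {Δ : M} (hΔ : IsGarsideElt Δ) (x : M) :
    ∃ k, LDvd x (Δ ^ k) := by
  have hx : x ∈ Submonoid.closure (Factors Δ) := hΔ.2 ▸ Submonoid.mem_top x
  induction hx using Submonoid.closure_induction with
  | mem s hs => exact ⟨1, (pow_one Δ).symm ▸ hΔ.1.ldvd_of_mem_factors hs⟩
  | one => exact ⟨0, one_ldvd _⟩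
  | mul x y _ _ ihx ihy =>
    obtain ⟨kx, x', hx'⟩ := ihx
    obtain ⟨ky, y', hy'⟩ := ihy
    obtain ⟨w, hw⟩ := hΔ.exists_mul_pow_eq_pow_mul x' ky
    exact ⟨kx + ky, y' * w, by rw [pow_add, hx', mul_assoc, hw, hy', mul_assoc, mul_assoc]⟩

theorem IsGarsideElt.exists_rdvd_pow {Δ : M} (hΔ : IsGarsideElt Δ) (x : M) :
    ∃ k, RDvd x (Δ ^ k) := by
  have hx : x ∈ Submonoid.closure (Factors Δ) := hΔ.2 ▸ Submonoid.mem_top x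
  induction hx using Submonoid.closure_induction with
  | mem s hs => exact ⟨1, (pow_one Δ).symm ▸ hΔ.1.rdvd_of_mem_factors hs⟩
  | one => exact ⟨0, one_rdvd _⟩
  | mul x y _ _ ihx ihy =>
    obtain ⟨kx, x', hx'⟩ := ihx
    obtain ⟨ky, y', hy'⟩ := ihy
    obtain ⟨w, hw⟩ := hΔ.exists_pow_mul_eq_mul_pow y' kx
    refine ⟨kx + ky, w * x', ?_⟩
    rw [pow_add, hy', ← mul_assoc, hw, hx']
    simp only [mul_assoc]

theorem IsGarside.exists_common_ldvd (hM : IsGarside M) (a b : M) :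
    ∃ c, LDvd a c ∧ LDvd b c := by
  obtain ⟨-, Δ, hΔ⟩ := hM
  obtain ⟨ka, a', ha⟩ := hΔ.exists_ldvd_pow a
  obtain ⟨kb, b', hb⟩ := hΔ.exists_ldvd_pow b
  exact ⟨Δ ^ (ka + kb), ⟨a' * Δ ^ kb, by rw [pow_add, ha, mul_assoc]⟩,
    ⟨b' * Δ ^ ka, by rw [pow_add, pow_mul_comm, hb, mul_assoc]⟩⟩

theorem IsGarside.exists_common_rdvd (hM : IsGarside M) (a b : M) :
    ∃ c, RDvd a c ∧ RDvd b c := by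
  obtain ⟨-, Δ, hΔ⟩ := hM
  obtain ⟨ka, a', ha⟩ := hΔ.exists_rdvd_pow a
  obtain ⟨kb, b', hb⟩ := hΔ.exists_rdvd_pow b
  exact ⟨Δ ^ (ka + kb), ⟨Δ ^ kb * a', by rw [pow_add, pow_mul_comm, ha, mul_assoc]⟩,
    ⟨Δ ^ ka * b', by rw [pow_add, hb, mul_assoc]⟩⟩

theorem IsGarside.exists_isLcmL (hM : IsGarside M) (a b : M) : ∃ m, IsLcmL a b m := by
  obtain ⟨c, ha, hb⟩ := hM.exists_common_ldvd a b
  exact hM.1.exists_isLcmL ha hb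

theorem IsGarside.exists_isLcmR (hM : IsGarside M) (a b : M) : ∃ m, IsLcmR a b m := by
  obtain ⟨c, ha, hb⟩ := hM.exists_common_rdvd a b
  exact hM.1.exists_isLcmR ha hb

end Garside

section EnvelopingGroup

open OreLocalization MulOpposite

theorem IsGarside.exists_mul_eq_mul (hM : IsGarside M) (a b : M) :
    ∃ uv : M × M, a * uv.1 = b * uv.2 := by
  obtain ⟨c, ⟨u, hu⟩, ⟨v, hv⟩⟩ := hM.exists_common_ldvd a b
  exact ⟨(u, v), hu.symm.trans hv⟩

/-- Right fractions `a b⁻¹` of `M` are the left Ore fractions `b⁻¹ a` of `Mᵐᵒᵖ`. -/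
noncomputable abbrev IsGarside.oreSetTop (hM : IsGarside M) : OreSet (⊤ : Submonoid Mᵐᵒᵖ) where
  ore_right_cancel r₁ r₂ s h := ⟨1, by
    simp only [OneMemClass.coe_one, one_mul]
    exact unop_injective (hM.1.cancellative.left_cancel (congrArg unop h))⟩
  oreNum r s := op (hM.exists_mul_eq_mul r.unop (s : Mᵐᵒᵖ).unop).choose.2
  oreDenom r s := ⟨op (hM.exists_mul_eq_mul r.unop (s : Mᵐᵒᵖ).unop).choose.1, trivial⟩
  ore_eq r s := unop_injective (hM.exists_mul_eq_mul r.unop (s : Mᵐᵒᵖ).unop).choose_spec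

theorem IsEnvelopingGroup.exists_mul_eq_mul_of_frac_eq {M : Type} [Monoid M] {G : Type} [Group G]
    {κ : M →* G} (hκ : IsEnvelopingGroup M G κ) (hM : IsGarside M) {a b c d : M}
    (h : κ a * (κ b)⁻¹ = κ c * (κ d)⁻¹) : ∃ u v, a * u = c * v ∧ b * u = d * v := by
  let := hM.oreSetTop
  let f : M →* (OreLocalization (⊤ : Submonoid Mᵐᵒᵖ) Mᵐᵒᵖ)ˣᵐᵒᵖ :=
    { toFun x := op (numeratorUnit ⟨op x, trivial⟩)
      map_one' := congrArg op (Units.ext OreLocalization.one_def.symm)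
      map_mul' x y := congrArg op (Units.ext (map_mul numeratorHom (op y) (op x))) }
  obtain ⟨φ, hφ, -⟩ := hκ _ f
  have hφκ (x y : M) : ((φ (κ x * (κ y)⁻¹)).unop : OreLocalization (⊤ : Submonoid Mᵐᵒᵖ) Mᵐᵒᵖ) =
      op x /ₒ ⟨op y, Submonoid.mem_top _⟩ := by
    rw [map_mul, map_inv, ← φ.comp_apply, ← φ.comp_apply, hφ, unop_mul, unop_inv]
    exact OreLocalization.one_div_mul.trans (by rw [one_mul])
  have hfrac := hφκ a b
  rw [h, hφκ, oreDiv_eq_iff] at hfrac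
  obtain ⟨u, v, hnum, hden⟩ := hfrac
  exact ⟨(u : Mᵐᵒᵖ).unop, v.unop, congrArg unop hnum, congrArg unop hden⟩

end EnvelopingGroup

section NormalForms

variable {G : Type*} [Group G]

theorem inv_mul_eq_mul_inv_of_mul_eq {b c c' b' : G} (h : b * c' = c * b') :
    b⁻¹ * c = c' * b'⁻¹ := by
  rw [inv_mul_eq_iff_eq_mul, ← mul_assoc, eq_mul_inv_iff_mul_eq, h]

theorem isParabolic_top : IsParabolic (⊤ : Submonoid M) :=
  ⟨fun _ _ _ => ⟨trivial, trivial⟩, fun _ _ _ _ _ _ => trivial, fun _ _ _ _ _ _ => trivial⟩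

theorem exists_frac_of_mem_closure (hM : IsGarside M) (κ : M →* G) {P : Submonoid M}
    (hP : IsParabolic P) {g : G} (hg : g ∈ Subgroup.closure (κ '' (P : Set M))) :
    ∃ a ∈ P, ∃ b ∈ P, g = κ a * (κ b)⁻¹ := by
  induction hg using Subgroup.closure_induction with
  | mem x hx =>
    obtain ⟨a, ha, rfl⟩ := hx
    exact ⟨a, ha, 1, P.one_mem, by simp⟩
  | one => exact ⟨1, P.one_mem, 1, P.one_mem, by simp⟩
  | mul x y _ _ ihx ihy =>
    obtain ⟨a, ha, b, hb, rfl⟩ := ihx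
    obtain ⟨c, hc, d, hd, rfl⟩ := ihy
    obtain ⟨L, hL⟩ := hM.exists_isLcmL b c
    obtain ⟨c', hc'⟩ := hL.1
    obtain ⟨b', hb'⟩ := hL.2.1
    have hLP : L ∈ P := hP.2.1 b c L hb hc hL
    have hswap : (κ b)⁻¹ * κ c = κ c' * (κ b')⁻¹ :=
      inv_mul_eq_mul_inv_of_mul_eq (by rw [← map_mul, ← map_mul, ← hc', ← hb'])
    refine ⟨a * c', P.mul_mem ha (hP.1 b c' (hc' ▸ hLP)).2, d * b',
      P.mul_mem hd (hP.1 c b' (hb' ▸ hLP)).2, ?_⟩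
    rw [map_mul, map_mul, mul_inv_rev, mul_assoc, ← mul_assoc (κ b)⁻¹, hswap]
    group
  | inv x _ ih =>
    obtain ⟨a, ha, b, hb, rfl⟩ := ih
    exact ⟨b, hb, a, ha, by group⟩

theorem exists_normalForm_of_mem_closure (hM : IsGarside M) (κ : M →* G) {P : Submonoid M}
    (hP : IsParabolic P) {g : G} (hg : g ∈ Subgroup.closure (κ '' (P : Set M))) :
    ∃ a ∈ P, ∃ b ∈ P, NormalForm κ g a b := by
  obtain ⟨a, ha, b, hb, rfl⟩ := exists_frac_of_mem_closure hM κ hP hg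
  obtain ⟨t, hta, htb, hmax⟩ := hM.1.exists_isGcdR a b
  obtain ⟨a', rfl⟩ := hta
  obtain ⟨b', rfl⟩ := htb
  refine ⟨a', (hP.1 a' t ha).1, b', (hP.1 b' t hb).1, ?_,
    IsGcdR.rcoprime_of_eq hM.1.cancellative hM.1.atomic ⟨⟨a', rfl⟩, ⟨b', rfl⟩, hmax⟩ rfl rfl⟩
  rw [map_mul, map_mul, mul_inv_rev]
  group

theorem NormalForm.unique {M : Type} [Monoid M] {G : Type} [Group G] {κ : M →* G}
    (hM : IsGarside M) (hκ : IsEnvelopingGroup M G κ) {g : G} {a b c d : M}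
    (h₁ : NormalForm κ g a b) (h₂ : NormalForm κ g c d) : a = c ∧ b = d := by
  have hc := hM.1.cancellative
  obtain ⟨u, v, hac, hbd⟩ := hκ.exists_mul_eq_mul_of_frac_eq hM (h₁.1.symm.trans h₂.1)
  obtain ⟨ρ, ⟨p, hp⟩, ⟨q, hq⟩, hρ⟩ := hM.1.exists_isGcdR (a * u) (b * u)
  obtain ⟨e₁, he₁⟩ := hρ u ⟨a, rfl⟩ ⟨b, rfl⟩
  obtain ⟨e₂, he₂⟩ := hρ v ⟨c, hac⟩ ⟨d, hbd⟩
  have ha : a = p * e₁ := hc.right_cancel (by rw [hp, he₁, mul_assoc])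
  have hb : b = q * e₁ := hc.right_cancel (by rw [hq, he₁, mul_assoc])
  have hc' : c = p * e₂ := hc.right_cancel (by rw [← hac, hp, he₂, mul_assoc])
  have hd : d = q * e₂ := hc.right_cancel (by rw [← hbd, hq, he₂, mul_assoc])
  obtain rfl := h₁.2 e₁ ⟨p, ha⟩ ⟨q, hb⟩
  obtain rfl := h₂.2 e₂ ⟨p, hc'⟩ ⟨q, hd⟩
  simp only [mul_one] at ha hb hc' hd
  exact ⟨ha.trans hc'.symm, hb.trans hd.symm⟩

theorem NormalForm.mem_of_mem_closure {M : Type} [Monoid M] {G : Type} [Group G] {κ : M →* G}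
    (hM : IsGarside M) (hκ : IsEnvelopingGroup M G κ) {P : Submonoid M} (hP : IsParabolic P)
    {g : G} (hg : g ∈ Subgroup.closure (κ '' (P : Set M))) {a b : M}
    (h : NormalForm κ g a b) : a ∈ P ∧ b ∈ P := by
  obtain ⟨a', ha', b', hb', h'⟩ := exists_normalForm_of_mem_closure hM κ hP hg
  obtain ⟨rfl, rfl⟩ := h.unique hM hκ h'
  exact ⟨ha', hb'⟩

theorem leN.inv_mul_mem_closure {κ : M →* G} {N : Submonoid M} {x m : G} (h : leN κ N x m) :
    m⁻¹ * x ∈ Subgroup.closure (κ '' (N : Set M)) := by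
  obtain ⟨a₁, b₁, a₂, b₂, hx, hm, h₁, hh₁, h₂, hh₂, a, ha₂, hb₂, -⟩ := h
  have hκb₂ : κ b₂ = (κ h₂)⁻¹ * (κ h₁ * κ b₁ * κ a) := by
    rw [eq_inv_mul_iff_mul_eq, ← map_mul, ← map_mul, ← map_mul, hb₂]
  have hquot : m⁻¹ * x = (κ h₂)⁻¹ * κ h₁ := by
    rw [hx.1, hm.1, ha₂, hκb₂, map_mul]
    group
  rw [hquot]
  exact mul_mem (inv_mem (Subgroup.subset_closure ⟨h₂, hh₂, rfl⟩))
    (Subgroup.subset_closure ⟨h₁, hh₁, rfl⟩)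

end NormalForms

section Parabolic

variable {N K : Submonoid M}

theorem mem_mul_cancel_left (hM : IsPreGarside M) (hN : IsParabolic N) (hK : IsSpecial K)
    {y d w : M} (hy : y ∈ (N : Set M) * K) (hd : d ∈ N) (hw : y = d * w) :
    w ∈ (N : Set M) * K := by
  have hc := hM.cancellative
  obtain ⟨h, hh, b, hb, rfl⟩ := Set.mem_mul.mp hy
  obtain ⟨F, hF⟩ := hM.exists_isLcmL (ldvd_mul_right h b) ⟨w, hw⟩
  obtain ⟨n₁, hn₁⟩ := hF.1
  obtain ⟨n₂, hn₂⟩ := hF.2.1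
  have hFN : F ∈ N := hN.2.1 h d F hh hd hF
  obtain ⟨t, ht⟩ := hF.2.2 (h * b) (ldvd_mul_right h b) ⟨w, hw⟩
  have hbt : b = n₁ * t := hc.left_cancel (by rw [ht, hn₁, mul_assoc])
  have hwt : w = n₂ * t := hc.left_cancel (c := d) (by rw [← hw, ht, hn₂, mul_assoc])
  exact hwt ▸ Set.mul_mem_mul (hN.1 d n₂ (hn₂ ▸ hFN)).2 (hK n₁ t (hbt ▸ hb)).2

theorem mem_mul_cancel_right (hM : IsPreGarside M) (hN : IsSpecial N) (hK : IsParabolic K)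
    {y x p : M} (hy : y ∈ (N : Set M) * K) (hp : p ∈ K) (hx : y = x * p) :
    x ∈ (N : Set M) * K := by
  have hc := hM.cancellative
  obtain ⟨h, hh, b, hb, rfl⟩ := Set.mem_mul.mp hy
  obtain ⟨V, hV⟩ := hM.exists_isLcmR (rdvd_mul_left h b) ⟨x, hx⟩
  obtain ⟨p', hp'⟩ := hV.1
  obtain ⟨b', hb'⟩ := hV.2.1
  have hVK : V ∈ K := hK.2.2 b p V hb hp hV
  obtain ⟨W, hW⟩ := hV.2.2 (h * b) (rdvd_mul_left h b) ⟨x, hx⟩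
  have hhW : h = W * p' := hc.right_cancel (by rw [hW, hp', mul_assoc])
  have hxW : x = W * b' := hc.right_cancel (d := p) (by rw [← hx, hW, hb', mul_assoc])
  exact hxW ▸ Set.mul_mem_mul (hN W p' (hhW ▸ hh)).1 (hK.1 b' p (hb' ▸ hVK)).1

theorem exists_eq_mul_of_mul_eq_mul (hM : IsPreGarside M) (hN : IsSpecial N)
    (hK : IsParabolic K) {α β ρ a₁ y t : M} (ha₁ : a₁ ∈ K) (hy : y ∈ (N : Set M) * K)
    (hα : α * ρ = a₁ * t) (hβ : β * ρ = y * t) :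
    ∃ a₁' ∈ K, ∃ y' ∈ (N : Set M) * K, ∃ a, α = a₁' * a ∧ β = y' * a := by
  have hc := hM.cancellative
  obtain ⟨V, hV⟩ := hM.exists_isLcmR (rdvd_mul_left a₁ t) ⟨α, hα.symm⟩
  obtain ⟨P, hP⟩ := hV.1
  obtain ⟨Q, hQ⟩ := hV.2.1
  obtain ⟨s, hs⟩ := hV.2.2 (a₁ * t) (rdvd_mul_left a₁ t) ⟨α, hα.symm⟩
  obtain ⟨X, hX⟩ := hV.2.2 (y * t) (rdvd_mul_left y t) ⟨β, hβ.symm⟩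
  have ha₁s : a₁ = s * P := hc.right_cancel (by rw [hs, hP, mul_assoc])
  have hyX : y = X * P := hc.right_cancel (by rw [hX, hP, mul_assoc])
  refine ⟨s, (hK.1 s P (ha₁s ▸ ha₁)).1, X, mem_mul_cancel_right hM hN hK hy
    (hK.1 s P (ha₁s ▸ ha₁)).2 hyX, Q, ?_, ?_⟩
  · exact hc.right_cancel (d := ρ) (by rw [hα, hs, hQ, mul_assoc])
  · exact hc.right_cancel (d := ρ) (by rw [hβ, hX, hQ, mul_assoc])

theorem mem_of_lcoprime_of_mul_eq_mul (hM : IsPreGarside M) (hK : IsParabolic K)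
    {u v a b : M} (hcop : LCoprime v u) (h : v * b = u * a) (hb : b ∈ K) (ha : a ∈ K) :
    u ∈ K := by
  have hc := hM.cancellative
  obtain ⟨L, hL⟩ := hM.exists_isLcmL (ldvd_mul_right u a) ⟨b, h.symm⟩
  obtain ⟨q, hq⟩ := hL.1
  obtain ⟨p, hp⟩ := hL.2.1
  obtain ⟨r, hr⟩ := hL.2.2 (u * a) (ldvd_mul_right u a) ⟨b, h.symm⟩
  have hbpr : b = p * r := hc.left_cancel (c := v) (by rw [h, hr, hp, mul_assoc])
  have haqr : a = q * r := hc.left_cancel (c := u) (by rw [hr, hq, mul_assoc])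
  have hpK : p ∈ K := (hK.1 p r (hbpr ▸ hb)).1
  have hqK : q ∈ K := (hK.1 q r (haqr ▸ ha)).1
  obtain ⟨ω, hω⟩ := hM.exists_isLcmR (c := L) ⟨u, hq⟩ ⟨v, hp⟩
  obtain ⟨l, hl⟩ := hω.2.2 L ⟨u, hq⟩ ⟨v, hp⟩
  obtain ⟨ω₁, hω₁⟩ := hω.1
  obtain ⟨ω₂, hω₂⟩ := hω.2.1
  have hu : u = l * ω₁ := hc.right_cancel (by rw [← hq, hl, hω₁, mul_assoc])
  have hv : v = l * ω₂ := hc.right_cancel (by rw [← hp, hl, hω₂, mul_assoc])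
  obtain rfl := hcop l ⟨ω₂, hv⟩ ⟨ω₁, hu⟩
  have hLK : L ∈ K := by rw [hl, one_mul]; exact hK.2.2 q p ω hqK hpK hω
  exact (hK.1 u q (hq ▸ hLK)).1

end Parabolic

section Minimal

variable {G : Type*} [Group G] {N K : Submonoid M}

theorem frac_mem_closure (κ : M →* G) {P : Submonoid M} {a b : M} (ha : a ∈ P) (hb : b ∈ P) :
    κ a * (κ b)⁻¹ ∈ Subgroup.closure (κ '' (P : Set M)) :=
  mul_mem (Subgroup.subset_closure ⟨a, ha, rfl⟩) (inv_mem (Subgroup.subset_closure ⟨b, hb, rfl⟩))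

/-- Dividing `h` and `y` by their left gcd, then `a₁` and `b₁` by their right gcd, turns the
relation into the balanced and reduced witness required by `≤_N`. -/
theorem exists_leN_of_mul_eq (hM : IsPreGarside M) (hN : IsParabolic N) (hK : IsSpecial K)
    (κ : M →* G) {m : G} {α β h a₁ y a : M} (hm : NormalForm κ m α β) (hh : h ∈ N)
    (ha₁ : a₁ ∈ K) (hy : y ∈ (N : Set M) * K) (hα : α = a₁ * a) (hβ : h * β = y * a) :
    ∃ x ∈ Subgroup.closure (κ '' (K : Set M)), leN κ N x m := by
  have hc := hM.cancellative
  obtain ⟨d, ⟨h', hh'⟩, ⟨w, hw⟩, hd⟩ := hM.exists_isGcdL h y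
  have hcop : LCoprime h' w :=
    IsGcdL.lcoprime_of_eq hc hM.atomic ⟨⟨h', hh'⟩, ⟨w, hw⟩, hd⟩ hh' hw
  have hdN : d ∈ N := (hN.1 d h' (hh' ▸ hh)).1
  obtain ⟨h₁, hh₁, b₁, hb₁, rfl⟩ := Set.mem_mul.mp (mem_mul_cancel_left hM hN hK hy hdN hw)
  have hβ' : h' * β = h₁ * b₁ * a :=
    hc.left_cancel (c := d) (by rw [← mul_assoc, ← hh', hβ, hw]; simp only [mul_assoc])
  obtain ⟨ρ, ⟨a', ha'⟩, ⟨b', hb'⟩, hρ⟩ := hM.exists_isGcdR a₁ b₁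
  refine ⟨κ a' * (κ b')⁻¹, frac_mem_closure κ (hK a' ρ (ha' ▸ ha₁)).1 (hK b' ρ (hb' ▸ hb₁)).1,
    a', b', α, β, ⟨rfl, ?_⟩, hm, h₁, hh₁, h', (hN.1 d h' (hh' ▸ hh)).2, ρ * a, ?_, ?_, 1,
    hcop.isGcdL_one (ldvd_mul_right h₁ b₁), hcop.isGcdL_one ⟨ρ, by rw [hb', mul_assoc]⟩⟩
  · exact IsGcdR.rcoprime_of_eq hc hM.atomic ⟨⟨a', ha'⟩, ⟨b', hb'⟩, hρ⟩ ha' hb'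
  · rw [hα, ha', mul_assoc]
  · rw [hβ', hb']; simp only [mul_assoc]

theorem exists_leN_of_inv_mul_mem_closure {M : Type} [Monoid M] {G : Type} [Group G]
    {N K : Submonoid M} {κ : M →* G} (hM : IsGarside M) (hκ : IsEnvelopingGroup M G κ)
    (hN : IsParabolic N) (hK : IsParabolic K) {g m : G}
    (hg : g ∈ Subgroup.closure (κ '' (K : Set M)))
    (hm : g⁻¹ * m ∈ Subgroup.closure (κ '' (N : Set M))) :
    ∃ x ∈ Subgroup.closure (κ '' (K : Set M)), leN κ N x m := by
  have hmtop : m ∈ Subgroup.closure (κ '' ((⊤ : Submonoid M) : Set M)) := by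
    have hmono (P : Submonoid M) : Subgroup.closure (κ '' (P : Set M)) ≤
        Subgroup.closure (κ '' ((⊤ : Submonoid M) : Set M)) :=
      Subgroup.closure_mono (Set.image_mono (Set.subset_univ _))
    simpa using mul_mem (hmono K hg) (hmono N hm)
  obtain ⟨p, hp, q, hq, rfl⟩ := exists_frac_of_mem_closure hM κ hK hg
  obtain ⟨c, hc, d, hd, hcd⟩ := exists_frac_of_mem_closure hM κ hN hm
  obtain ⟨α, -, β, -, hmα⟩ := exists_normalForm_of_mem_closure hM κ isParabolic_top hmtop
  obtain ⟨L, hL⟩ := hM.exists_isLcmR c d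
  obtain ⟨h₁, hh₁⟩ := hL.1
  obtain ⟨h₂, hh₂⟩ := hL.2.1
  have hLN : L ∈ N := hN.2.2 c d L hc hd hL
  have hfrac : κ α * (κ (h₂ * β))⁻¹ = κ p * (κ (h₁ * q))⁻¹ := by
    have hm' : m = κ p * (κ q)⁻¹ * (κ c * (κ d)⁻¹) := by rw [← hcd]; group
    have hκc : κ c = (κ h₁)⁻¹ * (κ h₂ * κ d) := by
      rw [eq_inv_mul_iff_mul_eq, ← map_mul, ← map_mul, ← hh₁, ← hh₂]
    calc κ α * (κ (h₂ * β))⁻¹ = m * (κ h₂)⁻¹ := by rw [hmα.1, map_mul]; group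
      _ = κ p * (κ (h₁ * q))⁻¹ := by rw [hm', hκc, map_mul]; group
  obtain ⟨u, v, hu, hv⟩ := hκ.exists_mul_eq_mul_of_frac_eq hM hfrac
  obtain ⟨a₁, ha₁, y, hy, a, hα, hβ⟩ := exists_eq_mul_of_mul_eq_mul hM.1 hN.1 hK hp
    (Set.mul_mem_mul (hN.1 h₁ c (hh₁ ▸ hLN)).1 hq) hu hv
  exact exists_leN_of_mul_eq hM.1 hN hK.1 κ hmα (hN.1 h₂ d (hh₂ ▸ hLN)).1 ha₁ hy hα hβ

theorem leN.mem_closure_of_mem_closure {M : Type} [Monoid M] {G : Type} [Group G]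
    {N K : Submonoid M} {κ : M →* G} (hM : IsGarside M) (hκ : IsEnvelopingGroup M G κ)
    (hK : IsParabolic K) {g₁ g₂ : G} (h : leN κ N g₁ g₂)
    (hg₂ : g₂ ∈ Subgroup.closure (κ '' (K : Set M))) :
    g₁ ∈ Subgroup.closure (κ '' (K : Set M)) := by
  have hc := hM.1.cancellative
  obtain ⟨a₁, b₁, a₂, b₂, hnf₁, hnf₂, h₁, -, h₂, -, a, ha₂, heq, d, hd₁, hd₂⟩ := h
  obtain ⟨ha₂K, hb₂K⟩ := hnf₂.mem_of_mem_closure hM hκ hK hg₂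
  obtain ⟨e₂, he₂⟩ := hd₂.1
  obtain ⟨e₁, he₁⟩ := hd₁.2.1
  have hcop : LCoprime e₂ (e₁ * b₁) :=
    hd₂.lcoprime_of_eq hc hM.1.atomic he₂ (by rw [he₁, mul_assoc])
  have heq' : e₂ * b₂ = e₁ * b₁ * a :=
    hc.left_cancel (c := d) (by rw [← mul_assoc, ← he₂, heq, he₁]; simp only [mul_assoc])
  have hu := mem_of_lcoprime_of_mul_eq_mul hM.1 hK hcop heq' hb₂K (hK.1 a₁ a (ha₂ ▸ ha₂K)).2
  rw [hnf₁.1]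
  exact frac_mem_closure κ (hK.1 a₁ a (ha₂ ▸ ha₂K)).1 (hK.1 e₁ b₁ hu).2

end Minimal

/-- **Proposition 4.5.** Let `M` be a Garside monoid, `N, K` parabolic submonoids, and
`g₁, g₂ ∈ G(M)` with `g₂ ∈ G(K)`. If `g₁ ≤_N g₂` then `g₁ ∈ G(K)`; in particular the
`≤_N`-minimal representative `m_N(g₂)` of `g₂ G(N)` lies in `G(K)`. -/
theorem proposition_4_5 {M : Type} [Monoid M] (hM : IsGarside M)
    (N K : Submonoid M) (hN : IsParabolic N) (hK : IsParabolic K)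
    {G : Type} [Group G] (κ : M →* G) (hκ : IsEnvelopingGroup M G κ)
    (g₁ g₂ : G) (hg₂ : g₂ ∈ Subgroup.closure (κ '' (K : Set M))) :
    (leN κ N g₁ g₂ → g₁ ∈ Subgroup.closure (κ '' (K : Set M))) ∧
    ∀ m : G, (g₂⁻¹ * m ∈ Subgroup.closure (κ '' (N : Set M)) ∧
        ∀ x : G, g₂⁻¹ * x ∈ Subgroup.closure (κ '' (N : Set M)) → leN κ N x m → x = m) →
      m ∈ Subgroup.closure (κ '' (K : Set M)) := by
  refine ⟨fun h => h.mem_closure_of_mem_closure hM hκ hK hg₂, fun m ⟨hm, hmin⟩ => ?_⟩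
  obtain ⟨x, hxK, hxm⟩ := exists_leN_of_inv_mul_mem_closure hM hκ hN hK hg₂ hm
  have hx : g₂⁻¹ * x ∈ Subgroup.closure (κ '' (N : Set M)) := by
    simpa only [mul_assoc, mul_inv_cancel_left] using mul_mem hm hxm.inv_mul_mem_closure
  exact hmin x hx hxm ▸ hxK

end PG
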